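/- The map sending a standard type B partition π of ⟨n⟩ to the word w(π) = a_0 a_1 a_1^* ... a_n a_n^*, where a_0 = 0, a_i = a_i^* = 0 iff i ∈ S_0, a_i = -j and a_i^* = j iff i ∈ S_{2j}, and a_i = j and a_i^* = -j iff i ∈ S_{2j-1}, is a bijection between standard type B partitions of ⟨n⟩ with 2k+1 blocks and signed restricted growth functions of length 2n+1 with maximal letter k. -/

import Mathlib

open Finset Polynomial

/-- The ground set ⟨n⟩ = {-n, ..., -1, 0, 1, ..., n}. -/
noncomputable def angleB (n : ℕ) : Finset ℤ := Finset.Icc (-(n : ℤ)) (n : ℤ)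

/-- An ordered type B (signed) partition of ⟨n⟩ with 2k+1 blocks:
pairwise disjoint nonempty blocks covering ⟨n⟩, with 0 ∈ S₀, S₀ closed under
negation, and S_{2i} = -S_{2i-1} for i ≥ 1. -/
def IsOrderedB (n k : ℕ) (S : Fin (2*k+1) → Finset ℤ) : Prop :=
  (∀ i, (S i).Nonempty) ∧
  (∀ i j, i ≠ j → Disjoint (S i) (S j)) ∧
  (Finset.univ.biUnion S = angleB n) ∧
  ((0 : ℤ) ∈ S 0) ∧
  (∀ x ∈ S 0, -x ∈ S 0) ∧
  (∀ i : ℕ, 1 ≤ i → ∀ h : 2*i < 2*k+1,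
    S ⟨2*i, h⟩ = (S ⟨2*i-1, by omega⟩).image (fun x => -x))

/-- m_j = min |S_j| (0 if the block is empty). -/
def mB {m : ℕ} (S : Fin m → Finset ℤ) (j : Fin m) : ℤ :=
  (((S j).image (fun x => |x|)).min).untopD 0

/-- M_j = max |S_j| (0 if the block is empty). -/
def MB {m : ℕ} (S : Fin m → Finset ℤ) (j : Fin m) : ℤ :=
  (((S j).image (fun x => |x|)).max).unbotD 0

/-- A standard type B partition: ordered, with m_{2i} ∈ S_{2i} for i ≥ 1 and
0 = m₀ < m₂ < m₄ < ... < m_{2k}. -/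
def IsStandardB (n k : ℕ) (S : Fin (2*k+1) → Finset ℤ) : Prop :=
  IsOrderedB n k S ∧
  (∀ i : ℕ, 1 ≤ i → ∀ h : 2*i < 2*k+1, mB S ⟨2*i, h⟩ ∈ S ⟨2*i, h⟩) ∧
  (∀ i : ℕ, ∀ h : 2*(i+1) < 2*k+1, mB S ⟨2*i, by omega⟩ < mB S ⟨2*(i+1), h⟩)

/-- inv ρ: number of pairs (s, S_j) with s ∈ S_i for some i < j and s ≥ m_j. -/
noncomputable def invB {m : ℕ} (S : Fin m → Finset ℤ) : ℕ :=
  {p : ℤ × Fin m | (∃ i < p.2, p.1 ∈ S i) ∧ mB S p.2 ≤ p.1}.ncard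

/-- ros_B = inv. -/
noncomputable def rosB {m : ℕ} (S : Fin m → Finset ℤ) : ℕ := invB S

/-- los_{B'}: pairs (s, S_j) with s ∈ S_i for some i > j and s ≥ m_j. -/
noncomputable def losB' {m : ℕ} (S : Fin m → Finset ℤ) : ℕ :=
  {p : ℤ × Fin m | (∃ i, p.2 < i ∧ p.1 ∈ S i) ∧ mB S p.2 ≤ p.1}.ncard

/-- lob_{B'}: pairs (s, S_j) with s ∈ S_i for some i > j and 0 < s ≤ m_j. -/
noncomputable def lobB' {m : ℕ} (S : Fin m → Finset ℤ) : ℕ :=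
  {p : ℤ × Fin m | (∃ i, p.2 < i ∧ p.1 ∈ S i) ∧ 0 < p.1 ∧ p.1 ≤ mB S p.2}.ncard

/-- rcb_B: pairs (s, S_j) with s ∈ S_i for some i < j and 0 < s ≤ M_j. -/
noncomputable def rcbB {m : ℕ} (S : Fin m → Finset ℤ) : ℕ :=
  {p : ℤ × Fin m | (∃ i < p.2, p.1 ∈ S i) ∧ 0 < p.1 ∧ p.1 ≤ MB S p.2}.ncard

/-- rob_B: pairs (s, S_j) with s ∈ S_i for some i < j and 0 < s ≤ m_j. -/
noncomputable def robB {m : ℕ} (S : Fin m → Finset ℤ) : ℕ :=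
  {p : ℤ × Fin m | (∃ i < p.2, p.1 ∈ S i) ∧ 0 < p.1 ∧ p.1 ≤ mB S p.2}.ncard

/-- rcs_B: pairs (s, S_j) with s ∈ S_i for some i < j and s ≥ M_j. -/
noncomputable def rcsB {m : ℕ} (S : Fin m → Finset ℤ) : ℕ :=
  {p : ℤ × Fin m | (∃ i < p.2, p.1 ∈ S i) ∧ MB S p.2 ≤ p.1}.ncard

/-- Type B Stirling numbers of the second kind. -/
def StirB : ℕ → ℕ → ℕ
  | 0, 0 => 1
  | 0, _+1 => 0
  | n+1, 0 => StirB n 0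
  | n+1, k+1 => StirB n k + (2*(k+1)+1) * StirB n (k+1)

/-- [m] = 1 + q + ... + q^{m-1}. -/
noncomputable def qb (m : ℕ) : Polynomial ℤ := ∑ i ∈ Finset.range m, (Polynomial.X : Polynomial ℤ) ^ i

/-- Type B q-Stirling numbers of the second kind. -/
noncomputable def qStirB : ℕ → ℕ → Polynomial ℤ
  | 0, 0 => 1
  | 0, _+1 => 0
  | n+1, 0 => qStirB n 0
  | n+1, k+1 => qStirB n k + qb (2*(k+1)+1) * qStirB n (k+1)

/-- [2k]!! = [2k][2k-2]⋯[2]. -/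
noncomputable def qdf : ℕ → Polynomial ℤ
  | 0 => 1
  | k+1 => qb (2*(k+1)) * qdf k

/-- The complement map on ⟨n⟩: i ↦ n+1-i for i > 0, -i ↦ -(n+1-i), 0 ↦ 0. -/
def complB (n : ℕ) (x : ℤ) : ℤ :=
  if 0 < x then (n : ℤ) + 1 - x else if x < 0 then -((n : ℤ) + 1) - x else 0

/-- Complement of a partition, blockwise. -/
def complP (n : ℕ) {m : ℕ} (S : Fin m → Finset ℤ) : Fin m → Finset ℤ :=
  fun j => (S j).image (complB n)

/-- The index of the block paired with block i: 0 ↦ 0, 2ℓ-1 ↦ 2ℓ, 2ℓ ↦ 2ℓ-1. -/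
def pairIdx (k : ℕ) (i : Fin (2*k+1)) : Fin (2*k+1) :=
  if i.val = 0 then i
  else if h2 : i.val % 2 = 1 then ⟨i.val + 1, by omega⟩ else ⟨i.val - 1, by omega⟩

/-- A signed restricted growth function, recorded by its entries a_0, a_1, ..., a_n
(the starred entries are determined: a_i^* = -a_i). -/
def IsSRGF (n : ℕ) (a : Fin (n+1) → ℤ) : Prop :=
  a 0 = 0 ∧
  (∀ i : Fin (n+1), 1 ≤ i.val →
    |a i| ≤ 1 + (((Finset.Iio i).image (fun j => |a j|)).max).unbotD 0) ∧
  (∀ i : Fin (n+1), 0 < a i → ∃ j < i, a j = -(a i))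

/-- The word of a type B partition: a_i = 0 if i ∈ S₀, a_i = -j if i ∈ S_{2j},
a_i = j if i ∈ S_{2j-1}. -/
noncomputable def wordOf (n k : ℕ) (S : Fin (2*k+1) → Finset ℤ) : Fin (n+1) → ℤ :=
  fun i =>
    if h : ∃ j : Fin (2*k+1), (i.val : ℤ) ∈ S j then
      (if (Classical.choose h).val % 2 = 1 then
        ((((Classical.choose h).val + 1) / 2 : ℕ) : ℤ)
      else -((((Classical.choose h).val) / 2 : ℕ) : ℤ))
    else 0

/-!
Give block `S_0` the letter `0`, `S_{2ℓ-1}` the letter `ℓ` and `S_{2ℓ}` the letter `-ℓ`.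
Since `S_{2ℓ} = -S_{2ℓ-1}`, the letter of `-i` is `-a_i`, so the word, extended oddly to `⟨n⟩`,
recovers the partition: `x` lies in the block whose letter is its extended letter. The side
conditions match because `m_{2ℓ}` is the first position with letter `-ℓ`: standardness
`m_0 < m_2 < ⋯ < m_{2k}` says that `-1, -2, …, -k` first occur in this order, i.e. the growth
condition, and `m_{2ℓ} = m_{2ℓ-1}`, `m_{2ℓ} ∈ S_{2ℓ}` says that `-ℓ` occurs before `ℓ`.
Conversely, in a signed restricted growth function the first position where `|a|` reaches `ℓ`
carries `-ℓ`, and it is `m_{2ℓ}` of the partition read off the word.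
-/

def blockLetter (j : ℕ) : ℤ :=
  if j % 2 = 1 then (((j + 1) / 2 : ℕ) : ℤ) else -((j / 2 : ℕ) : ℤ)

lemma blockLetter_injective : Function.Injective blockLetter := by
  intro i j h
  unfold blockLetter at h
  split_ifs at h <;> omega

lemma blockLetter_zero : blockLetter 0 = 0 := by
  simp [blockLetter]

lemma blockLetter_two_mul (ℓ : ℕ) : blockLetter (2 * ℓ) = -ℓ := by
  unfold blockLetter
  rw [if_neg (by omega)]
  omega

lemma blockLetter_two_mul_sub_one {ℓ : ℕ} (hℓ : 1 ≤ ℓ) : blockLetter (2 * ℓ - 1) = ℓ := by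
  unfold blockLetter
  rw [if_pos (by omega)]
  omega

lemma abs_blockLetter_le {j k : ℕ} (hj : j < 2 * k + 1) : |blockLetter j| ≤ k := by
  unfold blockLetter
  split_ifs <;> rw [abs_le] <;> constructor <;> omega

lemma exists_blockLetter_eq {k : ℕ} {c : ℤ} (hc : |c| ≤ k) :
    ∃ j < 2 * k + 1, blockLetter j = c := by
  rw [abs_le] at hc
  rcases le_or_gt c 0 with hc0 | hc0
  · exact ⟨2 * (-c).toNat, by omega, by rw [blockLetter_two_mul]; omega⟩
  · exact ⟨2 * c.toNat - 1, by omega, by rw [blockLetter_two_mul_sub_one (by omega)]; omega⟩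

lemma blockLetter_pairIdx (k : ℕ) (j : Fin (2 * k + 1)) :
    blockLetter (pairIdx k j) = -blockLetter j := by
  unfold pairIdx blockLetter
  split_ifs <;> simp_all <;> omega

section mB

variable {m : ℕ} (S : Fin m → Finset ℤ) {j : Fin m} {x : ℤ}

lemma mB_le_abs (hx : x ∈ S j) : mB S j ≤ |x| := by
  obtain ⟨v, hv⟩ := Finset.min_of_mem (Finset.mem_image_of_mem (fun x => |x|) hx)
  have hle := Finset.min_le (Finset.mem_image_of_mem (fun x => |x|) hx)
  rw [hv] at hle
  rw [mB, hv]
  exact_mod_cast hle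

lemma mB_nonneg : 0 ≤ mB S j := by
  unfold mB
  rcases h : ((S j).image (fun x => |x|)).min with _ | v
  · rfl
  · obtain ⟨y, -, rfl⟩ := Finset.mem_image.1 (Finset.mem_of_min h)
    exact abs_nonneg y

lemma mB_eq_abs (hx : x ∈ S j) (hmin : ∀ y ∈ S j, |x| ≤ |y|) : mB S j = |x| := by
  have hle := Finset.min_le (Finset.mem_image_of_mem (fun x => |x|) hx)
  have hge : ((|x| : ℤ) : WithTop ℤ) ≤ ((S j).image (fun x => |x|)).min :=
    Finset.le_min fun _ hv => by
      obtain ⟨y, hy, rfl⟩ := Finset.mem_image.1 hv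
      exact_mod_cast hmin y hy
  rw [mB, le_antisymm hle hge]
  rfl

end mB

lemma natCast_mem_angleB {n : ℕ} (i : Fin (n + 1)) : ((i : ℕ) : ℤ) ∈ angleB n := by
  simp only [angleB, Finset.mem_Icc]
  omega

lemma neg_mem_angleB {n : ℕ} {x : ℤ} (hx : x ∈ angleB n) : -x ∈ angleB n := by
  simp only [angleB, Finset.mem_Icc] at hx ⊢
  omega

lemma exists_natCast_eq_of_mem_angleB {n : ℕ} {x : ℤ} (hx : x ∈ angleB n) (h0 : 0 ≤ x) :
    ∃ i : Fin (n + 1), ((i : ℕ) : ℤ) = x := by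
  simp only [angleB, Finset.mem_Icc] at hx
  exact ⟨⟨x.toNat, by omega⟩, by simp [h0]⟩

namespace IsOrderedB

variable {n k : ℕ} {S : Fin (2 * k + 1) → Finset ℤ} (hS : IsOrderedB n k S)
include hS

lemma eq_of_mem_of_mem {x : ℤ} {i j : Fin (2 * k + 1)} (hi : x ∈ S i) (hj : x ∈ S j) :
    i = j := by
  by_contra hne
  exact Finset.disjoint_left.1 (hS.2.1 i j hne) hi hj

lemma mem_angleB {x : ℤ} {j : Fin (2 * k + 1)} (hx : x ∈ S j) : x ∈ angleB n := by
  rw [← hS.2.2.1]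
  exact Finset.mem_biUnion.2 ⟨j, Finset.mem_univ j, hx⟩

lemma exists_mem {x : ℤ} (hx : x ∈ angleB n) : ∃ j, x ∈ S j := by
  rw [← hS.2.2.1] at hx
  obtain ⟨j, -, hj⟩ := Finset.mem_biUnion.1 hx
  exact ⟨j, hj⟩

lemma mem_two_mul_iff {ℓ : ℕ} (hℓ : 1 ≤ ℓ) (h : 2 * ℓ < 2 * k + 1) {x : ℤ} :
    x ∈ S ⟨2 * ℓ, h⟩ ↔ -x ∈ S ⟨2 * ℓ - 1, by omega⟩ := by
  rw [hS.2.2.2.2.2 ℓ hℓ h, Finset.mem_image]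
  exact ⟨fun ⟨y, hy, hyx⟩ => hyx ▸ (neg_neg y).symm ▸ hy,
    fun hx => ⟨-x, hx, neg_neg x⟩⟩

lemma neg_mem_pairIdx {x : ℤ} {j : Fin (2 * k + 1)} (hx : x ∈ S j) :
    -x ∈ S (pairIdx k j) := by
  have hj := j.isLt
  unfold pairIdx
  split_ifs with h0 hodd
  · obtain rfl : j = 0 := Fin.ext h0
    exact hS.2.2.2.2.1 x hx
  · have hodd' : (⟨2 * ((j + 1) / 2) - 1, by omega⟩ : Fin (2 * k + 1)) = j :=
      Fin.ext (by simp only; omega)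
    have heven : (⟨j + 1, by omega⟩ : Fin (2 * k + 1)) = ⟨2 * ((j + 1) / 2), by omega⟩ :=
      Fin.ext (by simp only; omega)
    rwa [heven, hS.mem_two_mul_iff (by omega), neg_neg, hodd']
  · have hodd' : (⟨j - 1, by omega⟩ : Fin (2 * k + 1)) = ⟨2 * (j / 2) - 1, by omega⟩ :=
      Fin.ext (by simp only; omega)
    have heven : j = (⟨2 * (j / 2), by omega⟩ : Fin (2 * k + 1)) :=
      Fin.ext (by simp only; omega)
    rw [heven, hS.mem_two_mul_iff (by omega)] at hx
    rwa [hodd']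

lemma wordOf_eq {i : Fin (n + 1)} {j : Fin (2 * k + 1)} (hx : ((i : ℕ) : ℤ) ∈ S j) :
    wordOf n k S i = blockLetter j := by
  have h : ∃ j : Fin (2 * k + 1), ((i : ℕ) : ℤ) ∈ S j := ⟨j, hx⟩
  rw [wordOf, dif_pos h, hS.eq_of_mem_of_mem (Classical.choose_spec h) hx]
  rfl

lemma wordOf_zero : wordOf n k S 0 = 0 := by
  have h0 : (((0 : Fin (n + 1)) : ℕ) : ℤ) ∈ S 0 := hS.2.2.2.1
  rw [hS.wordOf_eq h0, Fin.val_zero, blockLetter_zero]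

lemma mem_of_wordOf_eq {i : Fin (n + 1)} {j : Fin (2 * k + 1)}
    (h : wordOf n k S i = blockLetter j) : ((i : ℕ) : ℤ) ∈ S j := by
  obtain ⟨j', hj'⟩ := hS.exists_mem (natCast_mem_angleB i)
  rwa [Fin.ext (blockLetter_injective ((hS.wordOf_eq hj').symm.trans h))] at hj'

lemma abs_wordOf_le (i : Fin (n + 1)) : |wordOf n k S i| ≤ k := by
  obtain ⟨j, hj⟩ := hS.exists_mem (natCast_mem_angleB i)
  rw [hS.wordOf_eq hj]
  exact abs_blockLetter_le j.isLt

end IsOrderedB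

section MaxImage

variable {ι α : Type*} [LinearOrder α] {s : Finset ι} (f : ι → α) (d : α)

lemma le_unbotD_max_image {x : ι} (hx : x ∈ s) : f x ≤ ((s.image f).max).unbotD d :=
  WithBot.le_unbotD (Finset.le_max (Finset.mem_image_of_mem f hx))

lemma unbotD_max_image_le {c : α} (hd : d ≤ c) (h : ∀ x ∈ s, f x ≤ c) :
    ((s.image f).max).unbotD d ≤ c := by
  rw [WithBot.unbotD_le_iff fun _ => hd]
  refine Finset.max_le fun b hb => ?_
  obtain ⟨x, hx, rfl⟩ := Finset.mem_image.1 hb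
  exact_mod_cast h x hx

end MaxImage

namespace IsStandardB

variable {n k : ℕ} {S : Fin (2 * k + 1) → Finset ℤ} (hS : IsStandardB n k S)
include hS

lemma mB_mem (ℓ : ℕ) (h : 2 * ℓ < 2 * k + 1) :
    mB S ⟨2 * ℓ, h⟩ ∈ S ⟨2 * ℓ, h⟩ := by
  obtain rfl | hℓ := ℓ.eq_zero_or_pos
  · have h0 : (0 : ℤ) ∈ S ⟨2 * 0, h⟩ := hS.1.2.2.2.1
    rwa [mB_eq_abs S h0 fun y _ => by simp, abs_zero]
  · exact hS.2.1 ℓ hℓ h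

lemma exists_wordOf_eq_neg (ℓ : ℕ) (h : 2 * ℓ < 2 * k + 1) :
    ∃ q : Fin (n + 1), ((q : ℕ) : ℤ) = mB S ⟨2 * ℓ, h⟩ ∧ wordOf n k S q = -ℓ := by
  have hmem := hS.mB_mem ℓ h
  obtain ⟨q, hq⟩ := exists_natCast_eq_of_mem_angleB (hS.1.mem_angleB hmem) (mB_nonneg S)
  refine ⟨q, hq, ?_⟩
  rw [hS.1.wordOf_eq (hq ▸ hmem), blockLetter_two_mul]

lemma mB_le_of_abs_wordOf_eq {i : Fin (n + 1)} {ℓ : ℕ} (h : 2 * ℓ < 2 * k + 1)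
    (hi : |wordOf n k S i| = ℓ) : mB S ⟨2 * ℓ, h⟩ ≤ ((i : ℕ) : ℤ) := by
  have habs : |((i : ℕ) : ℤ)| = i := abs_of_nonneg (Int.natCast_nonneg _)
  have hneg : wordOf n k S i = -ℓ → mB S ⟨2 * ℓ, h⟩ ≤ ((i : ℕ) : ℤ) := fun hw =>
    habs ▸ mB_le_abs S
      (hS.1.mem_of_wordOf_eq (j := ⟨2 * ℓ, h⟩) (by rw [hw, blockLetter_two_mul]))
  rcases abs_eq (Int.natCast_nonneg ℓ) |>.1 hi with hw | hw
  · obtain rfl | hℓ := ℓ.eq_zero_or_pos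
    · exact hneg (by simpa using hw)
    · have hodd := hS.1.mem_of_wordOf_eq (j := ⟨2 * ℓ - 1, by omega⟩)
        (by rw [hw, blockLetter_two_mul_sub_one hℓ])
      have hmem : -((i : ℕ) : ℤ) ∈ S ⟨2 * ℓ, h⟩ :=
        (hS.1.mem_two_mul_iff hℓ h).2 (by rwa [neg_neg])
      simpa [habs] using mB_le_abs S hmem
  · exact hneg hw

lemma abs_wordOf_le_one_add_max {i : Fin (n + 1)} (hi : i ≠ 0) :
    |wordOf n k S i| ≤ 1 + (((Finset.Iio i).image fun j => |wordOf n k S j|).max).unbotD 0 := by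
  set ℓ := (wordOf n k S i).natAbs
  have hiℓ : |wordOf n k S i| = ℓ := Int.natCast_natAbs _ ▸ rfl
  have hℓk : ℓ ≤ k := by have := hS.1.abs_wordOf_le i; omega
  have hmax0 := le_unbotD_max_image (fun j => |wordOf n k S j|) 0
    (Finset.mem_Iio.2 (Fin.pos_of_ne_zero hi))
  obtain hℓ | hℓ := ℓ.eq_zero_or_pos
  · have := abs_nonneg (wordOf n k S 0)
    omega
  -- the first occurrence of `-(ℓ - 1)` is at `m_{2ℓ-2} < m_{2ℓ} ≤ i`
  obtain ⟨q, hq, hwq⟩ := hS.exists_wordOf_eq_neg (ℓ - 1) (by omega)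
  have hchain := hS.2.2 (ℓ - 1) (by omega)
  have hidx : (⟨2 * (ℓ - 1 + 1), by omega⟩ : Fin (2 * k + 1)) = ⟨2 * ℓ, by omega⟩ :=
    Fin.ext (by simp only; omega)
  rw [hidx] at hchain
  have hqi : q < i := by
    have := hS.mB_le_of_abs_wordOf_eq (by omega) hiℓ
    rw [Fin.lt_def]
    omega
  have hmax := le_unbotD_max_image (fun j => |wordOf n k S j|) 0 (Finset.mem_Iio.2 hqi)
  simp only [hwq, abs_neg, Nat.abs_cast] at hmax
  omega

lemma exists_lt_wordOf_eq_neg {i : Fin (n + 1)} (hpos : 0 < wordOf n k S i) :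
    ∃ q < i, wordOf n k S q = -wordOf n k S i := by
  set ℓ := (wordOf n k S i).natAbs
  have hiℓ : |wordOf n k S i| = ℓ := Int.natCast_natAbs _ ▸ rfl
  have hℓk : ℓ ≤ k := by have := hS.1.abs_wordOf_le i; omega
  obtain ⟨q, hq, hwq⟩ := hS.exists_wordOf_eq_neg ℓ (by omega)
  have hqi := hS.mB_le_of_abs_wordOf_eq (by omega) hiℓ
  refine ⟨q, lt_of_le_of_ne (by rw [Fin.le_def]; omega) fun hqi => ?_, by rw [hwq]; omega⟩
  subst hqi
  omega

lemma isSRGF_wordOf : IsSRGF n (wordOf n k S) :=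
  ⟨hS.1.wordOf_zero, fun _ hi => hS.abs_wordOf_le_one_add_max (by rintro rfl; simp at hi),
    fun _ => hS.exists_lt_wordOf_eq_neg⟩

lemma exists_abs_wordOf_eq : ∃ i, |wordOf n k S i| = k := by
  obtain ⟨q, -, hq⟩ := hS.exists_wordOf_eq_neg k (by omega)
  exact ⟨q, by simp [hq]⟩

end IsStandardB

/-- The word extended to all of `⟨n⟩` by `a_{-i} = a_i^* = -a_i` (meaningful on `⟨n⟩` only,
where `Fin.ofNat` does not wrap around). -/
def signedWord {n : ℕ} (a : Fin (n + 1) → ℤ) (x : ℤ) : ℤ :=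
  x.sign * a (Fin.ofNat (n + 1) x.natAbs)

lemma signedWord_neg {n : ℕ} (a : Fin (n + 1) → ℤ) (x : ℤ) :
    signedWord a (-x) = -signedWord a x := by
  simp [signedWord, Int.sign_neg]

lemma signedWord_natCast {n : ℕ} {a : Fin (n + 1) → ℤ} (h0 : a 0 = 0) (i : Fin (n + 1)) :
    signedWord a ((i : ℕ) : ℤ) = a i := by
  obtain rfl | hi := eq_or_ne i 0
  · simp [signedWord, h0]
  · have hpos : 0 < ((i : ℕ) : ℤ) := by exact_mod_cast Fin.pos_of_ne_zero hi
    simp [signedWord, Int.sign_eq_one_of_pos hpos]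

lemma abs_signedWord_le {n : ℕ} (a : Fin (n + 1) → ℤ) (x : ℤ) :
    |signedWord a x| ≤ |a (Fin.ofNat (n + 1) x.natAbs)| := by
  rw [signedWord, abs_mul]
  exact mul_le_of_le_one_left (abs_nonneg _)
    (by rcases Int.sign_trichotomy x with h | h | h <;> simp [h])

noncomputable def partOf (n k : ℕ) (a : Fin (n + 1) → ℤ) : Fin (2 * k + 1) → Finset ℤ :=
  fun j => (angleB n).filter fun x => signedWord a x = blockLetter j

lemma mem_partOf {n k : ℕ} {a : Fin (n + 1) → ℤ} {j : Fin (2 * k + 1)} {x : ℤ} :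
    x ∈ partOf n k a j ↔ x ∈ angleB n ∧ signedWord a x = blockLetter j :=
  Finset.mem_filter

lemma partOf_disjoint {n k : ℕ} (a : Fin (n + 1) → ℤ) {i j : Fin (2 * k + 1)}
    (hij : i ≠ j) : Disjoint (partOf n k a i) (partOf n k a j) :=
  Finset.disjoint_left.2 fun _ hi hj =>
    hij (Fin.ext (blockLetter_injective ((mem_partOf.1 hi).2.symm.trans (mem_partOf.1 hj).2)))

namespace IsSRGF

variable {n k : ℕ} {a : Fin (n + 1) → ℤ} (ha : IsSRGF n a)
include ha

lemma exists_first_eq_neg {ℓ : ℕ} (hex : ∃ i, (ℓ : ℤ) ≤ |a i|) :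
    ∃ p, a p = -ℓ ∧ ∀ r, (ℓ : ℤ) ≤ |a r| → p ≤ r := by
  obtain ⟨p, hp, hmin⟩ := Finset.exists_min_image
    (Finset.univ.filter fun i => (ℓ : ℤ) ≤ |a i|) id (by simpa [Finset.Nonempty] using hex)
  simp only [Finset.mem_filter, Finset.mem_univ, true_and, id] at hp hmin
  have hbefore : ∀ r < p, |a r| < ℓ := fun r hr => lt_of_not_ge fun h => (hmin r h).not_gt hr
  have hle : |a p| ≤ ℓ := by
    obtain rfl | hp0 := eq_or_ne p 0
    · simp [ha.1]
    have hℓ : (0 : ℤ) < ℓ := by simpa [ha.1] using hbefore 0 (Fin.pos_of_ne_zero hp0)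
    have hrun := unbotD_max_image_le (s := Finset.Iio p) (fun j => |a j|) 0 (c := (ℓ : ℤ) - 1)
      (by omega) fun r hr => by have := hbefore r (Finset.mem_Iio.1 hr); omega
    have := ha.2.1 p (Nat.one_le_iff_ne_zero.2 (Fin.val_ne_of_ne hp0))
    omega
  refine ⟨p, ?_, hmin⟩
  rcases abs_eq (Int.natCast_nonneg ℓ) |>.1 (le_antisymm hle hp) with hpos | hneg
  · obtain hℓ | hℓ := ℓ.eq_zero_or_pos
    · simp [hpos, hℓ]
    obtain ⟨r, hr, har⟩ := ha.2.2 p (by omega)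
    exact absurd (hbefore r hr) (by simp [har, hpos])
  · exact hneg

lemma natCast_mem_partOf {ℓ : ℕ} (h : 2 * ℓ < 2 * k + 1) {p : Fin (n + 1)} (hp : a p = -ℓ) :
    ((p : ℕ) : ℤ) ∈ partOf n k a ⟨2 * ℓ, h⟩ :=
  mem_partOf.2 ⟨natCast_mem_angleB p, by rw [signedWord_natCast ha.1, hp, blockLetter_two_mul]⟩

lemma mB_partOf_eq {ℓ : ℕ} (h : 2 * ℓ < 2 * k + 1) {p : Fin (n + 1)} (hp : a p = -ℓ)
    (hmin : ∀ r, (ℓ : ℤ) ≤ |a r| → p ≤ r) : mB (partOf n k a) ⟨2 * ℓ, h⟩ = p := by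
  have hmem := ha.natCast_mem_partOf h hp
  rw [mB_eq_abs _ hmem fun y hy => ?_, abs_of_nonneg (Int.natCast_nonneg _)]
  obtain ⟨hy, hwy⟩ := mem_partOf.1 hy
  rw [blockLetter_two_mul] at hwy
  have hyn : y.natAbs < n + 1 := by simp only [angleB, Finset.mem_Icc] at hy; omega
  have hpy : (p : ℕ) ≤ (Fin.ofNat (n + 1) y.natAbs : ℕ) :=
    hmin _ (by simpa only [hwy, abs_neg, Nat.abs_cast] using abs_signedWord_le a y)
  rw [Fin.val_ofNat, Nat.mod_eq_of_lt hyn] at hpy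
  rw [abs_of_nonneg (Int.natCast_nonneg _), Int.abs_eq_natAbs]
  exact_mod_cast hpy

variable (hb : ∀ i, |a i| ≤ k) (hex : ∃ i, |a i| = k)
include hex

lemma exists_first_eq_neg_of_le {ℓ : ℕ} (hℓ : ℓ ≤ k) :
    ∃ p, a p = -ℓ ∧ ∀ r, (ℓ : ℤ) ≤ |a r| → p ≤ r :=
  ha.exists_first_eq_neg (hex.imp fun _ hi => by omega)

lemma exists_signedWord_eq {c : ℤ} (hc : |c| ≤ k) : ∃ x ∈ angleB n, signedWord a x = c := by
  obtain ⟨p, hp, -⟩ := ha.exists_first_eq_neg_of_le hex (ℓ := c.natAbs)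
    (by have := abs_le.1 hc; omega)
  have hwp : signedWord a ((p : ℕ) : ℤ) = -c.natAbs := by rw [signedWord_natCast ha.1, hp]
  rcases Int.natAbs_eq c with hc' | hc'
  · exact ⟨_, neg_mem_angleB (natCast_mem_angleB p), by rw [signedWord_neg, hwp]; omega⟩
  · exact ⟨_, natCast_mem_angleB p, by rw [hwp]; omega⟩

include hb

lemma isStandardB_partOf : IsStandardB n k (partOf n k a) := by
  choose p hp hmin using fun (ℓ : ℕ) (hℓ : ℓ ≤ k) => ha.exists_first_eq_neg_of_le hex hℓ
  refine ⟨⟨fun j => ?_, fun _ _ => partOf_disjoint a, ?_, ?_, fun x hx => ?_,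
    fun i hi h => ?_⟩, fun ℓ hℓ h => ?_, fun ℓ h => ?_⟩
  · obtain ⟨x, hx, hwx⟩ := ha.exists_signedWord_eq hex (abs_blockLetter_le j.isLt)
    exact ⟨x, mem_partOf.2 ⟨hx, hwx⟩⟩
  · ext x
    simp only [Finset.mem_biUnion, Finset.mem_univ, true_and, mem_partOf]
    refine ⟨fun ⟨_, hx, _⟩ => hx, fun hx => ?_⟩
    have hxk : |signedWord a x| ≤ k := (abs_signedWord_le a x).trans (hb _)
    obtain ⟨j, hj, hwj⟩ := exists_blockLetter_eq hxk
    exact ⟨⟨j, hj⟩, hx, hwj.symm⟩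
  · exact mem_partOf.2 ⟨by simp [angleB], by simp [signedWord, blockLetter_zero]⟩
  · obtain ⟨hx, hwx⟩ := mem_partOf.1 hx
    exact mem_partOf.2 ⟨neg_mem_angleB hx,
      by rw [signedWord_neg, hwx, Fin.val_zero, blockLetter_zero, neg_zero]⟩
  · ext y
    simp only [Finset.mem_image, mem_partOf, blockLetter_two_mul, blockLetter_two_mul_sub_one hi]
    refine ⟨fun ⟨hy, hwy⟩ => ⟨-y, ⟨neg_mem_angleB hy, ?_⟩, neg_neg y⟩, ?_⟩
    · rw [signedWord_neg, hwy, neg_neg]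
    · rintro ⟨x, ⟨hx, hwx⟩, rfl⟩
      exact ⟨neg_mem_angleB hx, by rw [signedWord_neg, hwx]⟩
  · rw [ha.mB_partOf_eq h (hp ℓ (by omega)) (hmin ℓ (by omega))]
    exact ha.natCast_mem_partOf h (hp ℓ (by omega))
  · rw [ha.mB_partOf_eq _ (hp ℓ (by omega)) (hmin ℓ (by omega)),
      ha.mB_partOf_eq h (hp (ℓ + 1) (by omega)) (hmin (ℓ + 1) (by omega))]
    have hle := hmin ℓ (by omega) (p (ℓ + 1) (by omega))
      (by rw [hp, abs_neg, Nat.abs_cast]; omega)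
    have hne : p ℓ (by omega) ≠ p (ℓ + 1) (by omega) := fun heq => by
      have := hp ℓ (by omega)
      rw [heq, hp] at this
      omega
    exact_mod_cast lt_of_le_of_ne hle hne

lemma wordOf_partOf : wordOf n k (partOf n k a) = a := by
  funext i
  obtain ⟨j, hj, hwj⟩ := exists_blockLetter_eq (hb i)
  have hmem : ((i : ℕ) : ℤ) ∈ partOf n k a ⟨j, hj⟩ :=
    mem_partOf.2 ⟨natCast_mem_angleB i, by rw [signedWord_natCast ha.1, hwj]⟩
  rw [(ha.isStandardB_partOf hb hex).1.wordOf_eq hmem, hwj]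

end IsSRGF

namespace IsOrderedB

variable {n k : ℕ} {S : Fin (2 * k + 1) → Finset ℤ} (hS : IsOrderedB n k S)
include hS

lemma signedWord_wordOf {x : ℤ} {j : Fin (2 * k + 1)} (hx : x ∈ S j) :
    signedWord (wordOf n k S) x = blockLetter j := by
  have hnonneg : ∀ {y : ℤ} {j : Fin (2 * k + 1)}, y ∈ S j → 0 ≤ y →
      signedWord (wordOf n k S) y = blockLetter j := fun hy hy0 => by
    obtain ⟨i, rfl⟩ := exists_natCast_eq_of_mem_angleB (hS.mem_angleB hy) hy0
    rw [signedWord_natCast hS.wordOf_zero, hS.wordOf_eq hy]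
  rcases le_or_gt 0 x with hx0 | hx0
  · exact hnonneg hx hx0
  · rw [← neg_neg x, signedWord_neg, hnonneg (hS.neg_mem_pairIdx hx) (by omega),
      blockLetter_pairIdx, neg_neg]

lemma partOf_wordOf : partOf n k (wordOf n k S) = S := by
  funext j
  ext x
  rw [mem_partOf]
  refine ⟨fun ⟨hx, hwx⟩ => ?_, fun hx => ⟨hS.mem_angleB hx, hS.signedWord_wordOf hx⟩⟩
  obtain ⟨j', hj'⟩ := hS.exists_mem hx
  rwa [Fin.ext (blockLetter_injective ((hS.signedWord_wordOf hj').symm.trans hwx))] at hj'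

end IsOrderedB

/-- π ↦ w(π) is a bijection between standard type B partitions of
⟨n⟩ with 2k+1 blocks and SRGFs of length 2n+1 with maximal letter k. -/
theorem stmt12 (n k : ℕ) :
    Set.BijOn (wordOf n k) {S | IsStandardB n k S}
      {a : Fin (n+1) → ℤ | IsSRGF n a ∧ (∀ i, |a i| ≤ (k : ℤ)) ∧
        (∃ i, |a i| = (k : ℤ))} :=
  Set.InvOn.bijOn ⟨fun _ hS => hS.1.partOf_wordOf, fun _ ha => ha.1.wordOf_partOf ha.2.1 ha.2.2⟩
    (fun _ hS => ⟨hS.isSRGF_wordOf, hS.1.abs_wordOf_le, hS.exists_abs_wordOf_eq⟩)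
    (fun _ ha => ha.1.isStandardB_partOf ha.2.1 ha.2.2)
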